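/- arXiv:2402.10475 — 6 statements merged into one kernel-verified Lean document; each statement's English description precedes it below -/
import Mathlib

section
/- Let A, B, C ≥ 0 with A < B, and define f : (0, ∞) → ℝ by f(x) = A·x + √((1 − B·x)² + C²·x²). Let D = √(B² + C² − A²). Then the minimum value of f is ((C+D)² − (B−A)²)/((C+D)² + (B−A)²), attained at x* = (1/D) · 2(C+D)(B−A)/((C+D)² + (B−A)²). -/
set_option maxHeartbeats 800000

theorem min_of_f (A B C : ℝ) (hA : 0 ≤ A) (hB : 0 ≤ B) (hC : 0 ≤ C) (hAB : A < B)
    (f : ℝ → ℝ) (hf : ∀ x, f x = A * x + Real.sqrt ((1 - B * x) ^ 2 + C ^ 2 * x ^ 2))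
    (D : ℝ) (hD : D = Real.sqrt (B ^ 2 + C ^ 2 - A ^ 2))
    (xstar : ℝ)
    (hx : xstar = (1 / D) * (2 * (C + D) * (B - A) / ((C + D) ^ 2 + (B - A) ^ 2))) :
    0 < xstar ∧
    f xstar = ((C + D) ^ 2 - (B - A) ^ 2) / ((C + D) ^ 2 + (B - A) ^ 2) ∧
    ∀ x, 0 < x → ((C + D) ^ 2 - (B - A) ^ 2) / ((C + D) ^ 2 + (B - A) ^ 2) ≤ f x := by
  have hKpos : 0 < B ^ 2 + C ^ 2 - A ^ 2 := by nlinarith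
  have hDpos : 0 < D := by rw [hD]; exact Real.sqrt_pos.mpr hKpos
  have hD2 : D ^ 2 = B ^ 2 + C ^ 2 - A ^ 2 := by rw [hD, Real.sq_sqrt hKpos.le]
  set S : ℝ := (C + D) ^ 2 + (B - A) ^ 2 with hS
  set N : ℝ := (C + D) ^ 2 - (B - A) ^ 2 with hN
  clear_value S N
  have hSpos : 0 < S := by rw [hS]; nlinarith
  -- key algebraic identity
  have key : ∀ x : ℝ, S ^ 2 * ((1 - B * x) ^ 2 + C ^ 2 * x ^ 2)
      = (N - S * A * x) ^ 2 + (S * D * x - 2 * (C + D) * (B - A)) ^ 2 := by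
    intro x
    rw [hS, hN]
    linear_combination (-D^4*x^2 - 4*C*D^3*x^2 - 6*C^2*D^2*x^2 - 4*C^3*D*x^2 - C^4*x^2
      + 2*B*D^2*x + 4*B*C*D*x + 2*B*C^2*x - 2*B^2*D^2*x^2 - 4*B^2*C*D*x^2 - 2*B^2*C^2*x^2
      + 2*B^3*x - B^4*x^2 - 2*A*D^2*x - 4*A*C*D*x - 2*A*C^2*x + 4*A*B*D^2*x^2
      + 8*A*B*C*D*x^2 + 4*A*B*C^2*x^2 - 6*A*B^2*x + 4*A*B^3*x^2 - 2*A^2*D^2*x^2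
      - 4*A^2*C*D*x^2 - 2*A^2*C^2*x^2 + 6*A^2*B*x - 6*A^2*B^2*x^2 - 2*A^3*x
      + 4*A^3*B*x^2 - A^4*x^2) * hD2
  -- second identity
  have h2 : D * N - 2 * A * (C + D) * (B - A)
      = 2 * C ^ 2 * D + 2 * C * (B ^ 2 + C ^ 2 - A * B) := by
    rw [hN]; linear_combination (D + 2 * C) * hD2
  have hnum : 0 ≤ D * N - 2 * A * (C + D) * (B - A) := by
    rw [h2]
    nlinarith [mul_nonneg (mul_nonneg hC hC) hDpos.le, mul_nonneg hC (sq_nonneg C),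
      mul_nonneg hC (mul_nonneg hB (sub_nonneg.mpr hAB.le))]
  have hxpos : 0 < xstar := by
    rw [hx]
    have h1 : 0 < 2 * (C + D) * (B - A) := by
      have : 0 < C + D := by linarith
      have : 0 < B - A := by linarith
      positivity
    exact mul_pos (by positivity) (div_pos h1 hSpos)
  have h0 : S * D * xstar - 2 * (C + D) * (B - A) = 0 := by
    rw [hx]
    field_simp
    ring
  have hAx : A * xstar = 2 * A * (C + D) * (B - A) / (D * S) := by
    rw [hx]; field_simp
  have hge : A * xstar ≤ N / S := by
    rw [hAx, div_le_div_iff₀ (by positivity) hSpos]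
    nlinarith [mul_nonneg hSpos.le hnum]
  have hQval : (1 - B * xstar) ^ 2 + C ^ 2 * xstar ^ 2 = (N / S - A * xstar) ^ 2 := by
    have hk := key xstar
    field_simp
    linear_combination hk + (S * D * xstar - 2 * (C + D) * (B - A)) * h0
  refine ⟨hxpos, ?_, ?_⟩
  · rw [hf, hQval, Real.sqrt_sq (by linarith [hge])]
    ring
  · intro x hxx
    rw [hf]
    set G := Real.sqrt ((1 - B * x) ^ 2 + C ^ 2 * x ^ 2) with hG
    have hG0 : 0 ≤ G := Real.sqrt_nonneg _
    have hG2 : G ^ 2 = (1 - B * x) ^ 2 + C ^ 2 * x ^ 2 := Real.sq_sqrt (by positivity)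
    rw [div_le_iff₀ hSpos]
    have hSG : (S * G) ^ 2 = S ^ 2 * ((1 - B * x) ^ 2 + C ^ 2 * x ^ 2) := by
      rw [mul_pow, hG2]
    have h1 : (N - S * A * x) ^ 2 ≤ (S * G) ^ 2 := by
      rw [hSG, key x]
      linarith [sq_nonneg (S * D * x - 2 * (C + D) * (B - A))]
    have h3 : N - S * A * x ≤ S * G := by
      nlinarith [h1, mul_nonneg hSpos.le hG0]
    nlinarith [h3]
end

section
/- Let a₀, a₁, a₂, a₃ be real numbers satisfying |a₁ + a₃| < 1 + a₀ + a₂, |a₁ − a₃| < 2(1 − a₀), a₂ − 3a₀ < 3, and a₀ + a₂ + a₀² + a₁² + a₀²a₂ + a₀a₃² < 1 + 2a₀a₂ + a₁a₃ + a₀a₁a₃ + a₀³. Then |a₃| < 6, |a₂| < 6, |a₁| < 6, and |a₀| < 1. -/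
/-!
The last condition says that `D = (1 - a₀)² (1 + a₀ - a₂) - (a₁ - a₃)(a₁ - a₀ a₃)` is positive.
With `c = 1 - a₀`, `u = a₁ - a₃`, `s = a₁ + a₃`, `p = 1 + a₀ + a₂` one has
`2D = 2c² (4 - 2c - p) + u² (c - 2) - c u s`; if `a₀ ≤ -1`, i.e. `c ≥ 2`, the bounds `|u| < 2c` and
`|s| < p` from the first two conditions make this at most `0`. Hence `-1 < a₀ < 1`, and the
remaining linear conditions confine `a₁, a₂, a₃` to `(-6, 6)`.
-/

def quarticSchurCohnDet (a₀ a₁ a₂ a₃ : ℝ) : ℝ :=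
  (1 - a₀) ^ 2 * (1 + a₀ - a₂) - (a₁ - a₃) * (a₁ - a₀ * a₃)

lemma quarticSchurCohnDet_pos_iff (a₀ a₁ a₂ a₃ : ℝ) :
    0 < quarticSchurCohnDet a₀ a₁ a₂ a₃ ↔
      a₀ + a₂ + a₀ ^ 2 + a₁ ^ 2 + a₀ ^ 2 * a₂ + a₀ * a₃ ^ 2 <
        1 + 2 * a₀ * a₂ + a₁ * a₃ + a₀ * a₁ * a₃ + a₀ ^ 3 := by
  unfold quarticSchurCohnDet
  constructor <;> intro h <;> linarith

lemma neg_one_lt_of_quarticSchurCohnDet_pos {a₀ a₁ a₂ a₃ : ℝ}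
    (h1 : |a₁ + a₃| < 1 + a₀ + a₂) (h2 : |a₁ - a₃| < 2 * (1 - a₀))
    (hD : 0 < quarticSchurCohnDet a₀ a₁ a₂ a₃) : -1 < a₀ := by
  by_contra! ha₀
  set c := 1 - a₀
  set u := a₁ - a₃
  set s := a₁ + a₃
  set p := 1 + a₀ + a₂
  have hc2 : 2 ≤ c := by linarith
  have hu_sq : u ^ 2 ≤ (2 * c) ^ 2 := sq_le_sq' (abs_lt.mp h2).1.le (abs_lt.mp h2).2.le
  have hus : -(u * s) ≤ 2 * c * p := by
    calc -(u * s) ≤ |u| * |s| := by rw [← abs_mul]; exact neg_le_abs _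
      _ ≤ 2 * c * p := mul_le_mul h2.le h1.le (abs_nonneg _) (by linarith)
  have hdet : 2 * quarticSchurCohnDet a₀ a₁ a₂ a₃ =
      2 * c ^ 2 * (4 - 2 * c - p) + u ^ 2 * (c - 2) - c * (u * s) := by
    simp only [quarticSchurCohnDet, c, u, s, p]; ring
  have : 2 * quarticSchurCohnDet a₀ a₁ a₂ a₃ ≤ 0 := by
    rw [hdet]
    linarith [mul_le_mul_of_nonneg_right hu_sq (by linarith : (0 : ℝ) ≤ c - 2),
      mul_le_mul_of_nonneg_left hus (by linarith : (0 : ℝ) ≤ c)]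
  linarith

theorem routh_hurwitz_quartic_coeff_bound (a₀ a₁ a₂ a₃ : ℝ)
    (h1 : |a₁ + a₃| < 1 + a₀ + a₂) (h2 : |a₁ - a₃| < 2 * (1 - a₀))
    (h3 : a₂ - 3 * a₀ < 3)
    (h4 : a₀ + a₂ + a₀ ^ 2 + a₁ ^ 2 + a₀ ^ 2 * a₂ + a₀ * a₃ ^ 2 <
          1 + 2 * a₀ * a₂ + a₁ * a₃ + a₀ * a₁ * a₃ + a₀ ^ 3) :
    |a₃| < 6 ∧ |a₂| < 6 ∧ |a₁| < 6 ∧ |a₀| < 1 := by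
  have ha₀_gt : -1 < a₀ :=
    neg_one_lt_of_quarticSchurCohnDet_pos h1 h2 ((quarticSchurCohnDet_pos_iff ..).mpr h4)
  have ha₀_lt : a₀ < 1 := by linarith [abs_nonneg (a₁ - a₃)]
  obtain ⟨h1l, h1r⟩ := abs_lt.mp h1
  obtain ⟨h2l, h2r⟩ := abs_lt.mp h2
  exact ⟨abs_lt.mpr ⟨by linarith, by linarith⟩, abs_lt.mpr ⟨by linarith, by linarith⟩,
    abs_lt.mpr ⟨by linarith, by linarith⟩, abs_lt.mpr ⟨ha₀_gt, ha₀_lt⟩⟩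
end

section
/- Let 0 ≤ Γ ≤ Δ < 1 and ψ > 0 satisfy ψ·(Δ − Γ) ≤ (1 − Δ)². Then the cubic polynomial P(λ) = λ(λ−1)² + ψ·(λ − Γ)(λ − Δ) has no positive real root. -/
/-! Outside the interval `(Γ, Δ)` both summands of `P` are nonnegative and they do not vanish
together. Inside it, `ψ (l - Γ) (Δ - l) < ψ l (Δ - Γ) ≤ l (1 - Δ)² < l (1 - l)²`. -/

section

variable {Γ Δ ψ l : ℝ}

lemma cubic_pos_of_le_left (hl : 0 < l) (hlΓ : l ≤ Γ) (hΓΔ : Γ ≤ Δ) (hΔ : Δ < 1)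
    (hψ : 0 ≤ ψ) : 0 < l * (l - 1) ^ 2 + ψ * (l - Γ) * (l - Δ) := by
  have hcubic : 0 < l * (l - 1) ^ 2 := mul_pos hl (sq_pos_of_ne_zero (by linarith))
  have hquad : 0 ≤ ψ * (l - Γ) * (l - Δ) :=
    mul_nonneg_of_nonpos_of_nonpos (mul_nonpos_of_nonneg_of_nonpos hψ (by linarith))
      (by linarith)
  linarith

lemma cubic_pos_of_le_right (hl : 0 < l) (hΔl : Δ ≤ l) (hΓΔ : Γ ≤ Δ) (hΔ : Δ < 1)
    (hψ : 0 < ψ) : 0 < l * (l - 1) ^ 2 + ψ * (l - Γ) * (l - Δ) := by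
  rcases eq_or_ne l 1 with rfl | hl1
  · have : 0 < ψ * (1 - Γ) * (1 - Δ) := mul_pos (mul_pos hψ (by linarith)) (by linarith)
    simpa using this
  · have hcubic : 0 < l * (l - 1) ^ 2 := mul_pos hl (sq_pos_of_ne_zero (sub_ne_zero.2 hl1))
    have hquad : 0 ≤ ψ * (l - Γ) * (l - Δ) :=
      mul_nonneg (mul_nonneg hψ.le (by linarith)) (by linarith)
    linarith

lemma cubic_pos_of_mem_Ioo (hΓ : 0 ≤ Γ) (hl : l ∈ Set.Ioo Γ Δ) (hΔ : Δ < 1) (hψ : 0 < ψ)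
    (hbound : ψ * (Δ - Γ) ≤ (1 - Δ) ^ 2) :
    0 < l * (l - 1) ^ 2 + ψ * (l - Γ) * (l - Δ) := by
  obtain ⟨hΓl, hlΔ⟩ := hl
  have hl : 0 < l := hΓ.trans_lt hΓl
  have key : ψ * (l - Γ) * (Δ - l) < l * (1 - l) ^ 2 :=
    calc ψ * (l - Γ) * (Δ - l) ≤ ψ * l * (Δ - l) := by gcongr; linarith
      _ < ψ * l * (Δ - Γ) := by gcongr
      _ = l * (ψ * (Δ - Γ)) := by ring
      _ ≤ l * (1 - Δ) ^ 2 := by gcongr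
      _ < l * (1 - l) ^ 2 := by gcongr
  linarith

end

theorem no_positive_root (Γ Δ ψ : ℝ) (hΓ : 0 ≤ Γ) (hΓΔ : Γ ≤ Δ) (hΔ : Δ < 1)
    (hψ : 0 < ψ) (hbound : ψ * (Δ - Γ) ≤ (1 - Δ) ^ 2) :
    ∀ l : ℝ, 0 < l → l * (l - 1) ^ 2 + ψ * (l - Γ) * (l - Δ) ≠ 0 := by
  intro l hl
  refine ne_of_gt ?_
  rcases le_or_gt l Γ with hlΓ | hΓl
  · exact cubic_pos_of_le_left hl hlΓ hΓΔ hΔ hψ.le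
  rcases le_or_gt Δ l with hΔl | hlΔ
  · exact cubic_pos_of_le_right hl hΔl hΓΔ hΔ hψ
  · exact cubic_pos_of_mem_Ioo hΓ ⟨hΓl, hlΔ⟩ hΔ hψ hbound
end

section
/- Let γ, δ be reals with (γ−1)(δ−1) ≥ 0 and 3/2 < γ + δ ≤ 2. Then there is no real ψ > 0 satisfying simultaneously (2 − γ − δ)/((γ−1)(δ−1)(γ+δ−1)) < ψ and ψ < 4/(1 − 4(γ−1)(δ−1)). -/
/-! Put `p = (γ - 1)(δ - 1)` and `t = 2 - γ - δ = (1 - γ) + (1 - δ)`. Eliminating `ψ` from the two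
bounds and clearing the (positive) denominators leaves `t (1 - 4p) < 4p (γ + δ - 1)`, which simplifies
to `t < 4p`. But AM-GM gives `4p ≤ t²`, and `t² ≤ t` because `0 ≤ t ≤ 1`. -/

theorem four_mul_le_add_of_nonneg_of_add_le_one {x y : ℝ} (h₀ : 0 ≤ x + y) (h₁ : x + y ≤ 1) :
    4 * x * y ≤ x + y :=
  calc 4 * x * y ≤ (x + y) ^ 2 := four_mul_le_sq_add x y
    _ ≤ x + y := pow_le_of_le_one h₀ h₁ two_ne_zero

theorem no_valid_psi (γ δ : ℝ) (hprod : 0 < (γ - 1) * (δ - 1))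
    (hsum1 : 3 / 2 < γ + δ) (hsum2 : γ + δ ≤ 2) :
    ¬ ∃ ψ : ℝ, 0 < ψ ∧
        (2 - γ - δ) / ((γ - 1) * (δ - 1) * (γ + δ - 1)) < ψ ∧
        ψ < 4 / (1 - 4 * (γ - 1) * (δ - 1)) := by
  rintro ⟨ψ, -, hlow, hupp⟩
  have hfour_p_le : 4 * ((γ - 1) * (δ - 1)) ≤ 2 - γ - δ := by
    have := four_mul_le_add_of_nonneg_of_add_le_one (x := 1 - γ) (y := 1 - δ) (by linarith)
      (by linarith)
    linarith [show 4 * (1 - γ) * (1 - δ) = 4 * ((γ - 1) * (δ - 1)) by ring]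
  have hD₁ : 0 < (γ - 1) * (δ - 1) * (γ + δ - 1) := mul_pos hprod (by linarith)
  have hD₂ : 0 < 1 - 4 * (γ - 1) * (δ - 1) := by linarith
  have hcross := (div_lt_div_iff₀ hD₁ hD₂).1 (hlow.trans hupp)
  have hcross_eq : 4 * ((γ - 1) * (δ - 1) * (γ + δ - 1)) - (2 - γ - δ) * (1 - 4 * (γ - 1) * (δ - 1))
      = 4 * ((γ - 1) * (δ - 1)) - (2 - γ - δ) := by ring
  linarith
end

section
/- Let c be a real number. The recurrence w_{k+1} = (1 − 2c)·w_k + c·w_{k−1} converges to 0 for all initial conditions if and only if 0 < c < 2/3; equivalently, both roots of w² − (1−2c)w − c = 0 have absolute value less than 1 if and only if 0 < c < 2/3. -/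
open Filter

theorem recurrence_converges_iff (c : ℝ) :
    ((∀ w : ℕ → ℝ, (∀ k, w (k + 2) = (1 - 2 * c) * w (k + 1) + c * w k) →
        Filter.Tendsto w Filter.atTop (nhds 0)) ↔ (0 < c ∧ c < 2 / 3)) ∧
    ((∀ z : ℂ, z ^ 2 - (1 - 2 * (c : ℂ)) * z - (c : ℂ) = 0 → ‖z‖ < 1) ↔
      (0 < c ∧ c < 2 / 3)) := by
  set s : ℝ := Real.sqrt (1 + 4 * c ^ 2) with hs
  have hsnn : 0 ≤ s := Real.sqrt_nonneg _
  have hs2 : s ^ 2 = 1 + 4 * c ^ 2 := Real.sq_sqrt (by positivity)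
  set r1 : ℝ := ((1 - 2 * c) + s) / 2 with hr1def
  set r2 : ℝ := ((1 - 2 * c) - s) / 2 with hr2def
  have hsum : r1 + r2 = 1 - 2 * c := by rw [hr1def, hr2def]; ring
  have hprod : r1 * r2 = -c := by
    rw [hr1def, hr2def]; nlinarith [hs2]
  have hroot1 : r1 ^ 2 = (1 - 2 * c) * r1 + c := by
    rw [hr1def]; nlinarith [hs2]
  have hroot2 : r2 ^ 2 = (1 - 2 * c) * r2 + c := by
    rw [hr2def]; nlinarith [hs2]
  have hne : r1 ≠ r2 := by
    have : (1:ℝ) ≤ s := by nlinarith [hs2, sq_nonneg c]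
    rw [hr1def, hr2def]; intro h; nlinarith
  -- factorization over ℂ
  have hfact : ∀ z : ℂ, z ^ 2 - (1 - 2 * (c : ℂ)) * z - (c : ℂ) =
      (z - (r1 : ℂ)) * (z - (r2 : ℂ)) := by
    intro z
    have h1 : ((r1 : ℂ) + (r2 : ℂ)) = 1 - 2 * (c : ℂ) := by exact_mod_cast hsum
    have h2 : ((r1 : ℂ) * (r2 : ℂ)) = -(c : ℂ) := by exact_mod_cast hprod
    linear_combination z * h1 - h2
  -- bounds under 0 < c < 2/3
  have hbounds : 0 < c → c < 2 / 3 → |r1| < 1 ∧ |r2| < 1 := by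
    intro h1 h2
    constructor <;> rw [abs_lt] <;> constructor <;>
      nlinarith [hs2, hsnn, hr1def, hr2def]
  -- bad root when condition fails
  have hbad : ¬ (0 < c ∧ c < 2 / 3) → ∃ r : ℝ, (r = r1 ∨ r = r2) ∧ 1 ≤ |r| := by
    intro h
    rcases not_and_or.mp h with h | h
    · push_neg at h
      refine ⟨r1, Or.inl rfl, ?_⟩
      have h3 : 1 + 2 * c ≤ s := by nlinarith [hs2, hsnn]
      have : 1 ≤ r1 := by rw [hr1def]; linarith
      calc (1:ℝ) ≤ r1 := this
        _ ≤ |r1| := le_abs_self _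
    · push_neg at h
      refine ⟨r2, Or.inr rfl, ?_⟩
      have h3 : 3 - 2 * c ≤ s := by nlinarith [hs2, hsnn]
      have : r2 ≤ -1 := by rw [hr2def]; linarith
      calc (1:ℝ) ≤ -r2 := by linarith
        _ ≤ |r2| := neg_le_abs _
  -- second iff
  have hiff2 : (∀ z : ℂ, z ^ 2 - (1 - 2 * (c : ℂ)) * z - (c : ℂ) = 0 →
      ‖z‖ < 1) ↔ (0 < c ∧ c < 2 / 3) := by
    constructor
    · intro h
      by_contra hcond
      obtain ⟨r, hr, habs⟩ := hbad hcond
      have hz : (r : ℂ) ^ 2 - (1 - 2 * (c : ℂ)) * (r : ℂ) - (c : ℂ) = 0 := by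
        rw [hfact]
        rcases hr with h' | h' <;> subst h' <;> simp
      have := h r hz
      rw [Complex.norm_real, Real.norm_eq_abs] at this
      linarith
    · intro hcond z hz
      rw [hfact] at hz
      rcases mul_eq_zero.mp hz with h | h
      · rw [sub_eq_zero.mp h, Complex.norm_real, Real.norm_eq_abs]
        exact (hbounds hcond.1 hcond.2).1
      · rw [sub_eq_zero.mp h, Complex.norm_real, Real.norm_eq_abs]
        exact (hbounds hcond.1 hcond.2).2
  constructor
  · -- first iff
    constructor
    · intro h
      by_contra hcond
      obtain ⟨r, hr, habs⟩ := hbad hcond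
      have hw : ∀ k, (fun k : ℕ => r ^ k) (k + 2) =
          (1 - 2 * c) * (fun k : ℕ => r ^ k) (k + 1) + c * (fun k : ℕ => r ^ k) k := by
        intro k
        have hr2' : r ^ 2 = (1 - 2 * c) * r + c := by
          rcases hr with h' | h' <;> subst h' <;> assumption
        simp only []
        calc r ^ (k + 2) = r ^ k * r ^ 2 := by ring
          _ = r ^ k * ((1 - 2 * c) * r + c) := by rw [hr2']
          _ = (1 - 2 * c) * r ^ (k + 1) + c * r ^ k := by ring
      have := h _ hw
      rw [tendsto_pow_atTop_nhds_zero_iff] at this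
      linarith
    · intro hcond w hw
      obtain ⟨ha1, ha2⟩ := hbounds hcond.1 hcond.2
      have hd : r1 - r2 ≠ 0 := sub_ne_zero.mpr hne
      set A : ℝ := (w 1 - r2 * w 0) / (r1 - r2) with hA
      set B : ℝ := (r1 * w 0 - w 1) / (r1 - r2) with hB
      have key : ∀ k, w k = A * r1 ^ k + B * r2 ^ k := by
        have step : ∀ k, w k = A * r1 ^ k + B * r2 ^ k ∧
            w (k + 1) = A * r1 ^ (k + 1) + B * r2 ^ (k + 1) := by
          intro k
          induction k with
          | zero =>
            constructor
            · rw [hA, hB]; field_simp; ring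
            · rw [hA, hB]; field_simp; ring
          | succ n ih =>
            refine ⟨ih.2, ?_⟩
            rw [hw n, ih.1, ih.2]
            have e1 : r1 ^ (n + 2) = r1 ^ n * ((1 - 2*c) * r1 + c) := by
              rw [← hroot1]; ring
            have e2 : r2 ^ (n + 2) = r2 ^ n * ((1 - 2*c) * r2 + c) := by
              rw [← hroot2]; ring
            rw [e1, e2]; ring
        exact fun k => (step k).1
      have t1 : Tendsto (fun k : ℕ => A * r1 ^ k + B * r2 ^ k) atTop (nhds 0) := by
        have := ((tendsto_pow_atTop_nhds_zero_iff.mpr ha1).const_mul A).add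
          ((tendsto_pow_atTop_nhds_zero_iff.mpr ha2).const_mul B)
        simpa using this
      exact t1.congr (fun k => (key k).symm)
  · exact hiff2
end

section
/- Let t, s be positive reals satisfying t² − t(2s+1) + 4s² − 2s < 0 and s² ≤ t. Then t < 1 + 2/√3. -/
/-! Read as a quadratic in `s`, the ellipse inequality has a solution only if its discriminant
`4 (t + 1)² - 16 (t² - t)` is positive, i.e. `3 (t - 1)² < 4`. -/

theorem discrim_pos_of_quadratic_neg {K : Type*} [Field K] [LinearOrder K] [IsStrictOrderedRing K]
    {a b c x : K} (ha : 0 < a) (h : a * (x * x) + b * x + c < 0) : 0 < discrim a b c := by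
  have hsq : (2 * a * x + b) ^ 2 - discrim a b c = 4 * a * (a * (x * x) + b * x + c) := by
    rw [discrim]; ring
  nlinarith [sq_nonneg (2 * a * x + b), mul_pos ha ha]

theorem lt_one_add_two_div_sqrt_three {t : ℝ} (h : 3 * (t - 1) ^ 2 < 4) :
    t < 1 + 2 / Real.sqrt 3 := by
  have hsq : (Real.sqrt 3 * (t - 1)) ^ 2 < 2 ^ 2 := by
    rw [mul_pow, Real.sq_sqrt (by norm_num)]; linarith
  have hlt : Real.sqrt 3 * (t - 1) < 2 :=
    (le_abs_self _).trans_lt (abs_lt_of_sq_lt_sq hsq (by norm_num))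
  rwa [← sub_lt_iff_lt_add', lt_div_iff₀' (by positivity)]

theorem ellipse_parabola_bound_general (t s : ℝ)
    (h1 : t ^ 2 - t * (2 * s + 1) + 4 * s ^ 2 - 2 * s < 0) :
    t < 1 + 2 / Real.sqrt 3 := by
  have hdisc : 0 < discrim 4 (-2 * (t + 1)) (t ^ 2 - t) :=
    discrim_pos_of_quadratic_neg (x := s) (by norm_num) (by linarith)
  apply lt_one_add_two_div_sqrt_three
  rw [discrim] at hdisc
  linarith

theorem ellipse_parabola_bound (t s : ℝ) (ht : 0 < t) (hs : 0 < s)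
    (h1 : t ^ 2 - t * (2 * s + 1) + 4 * s ^ 2 - 2 * s < 0) (h2 : s ^ 2 ≤ t) :
    t < 1 + 2 / Real.sqrt 3 :=
  ellipse_parabola_bound_general t s h1
end
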